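/- Let a, b > 0 and N ∈ ℕ with N ≥ 1. Define ĩ = max((N−3)·b²/(a²+b²), 0) + 2, j̃ = max((N−3)·a²/(a²+b²), 0) + 2, i* = ⌊ĩ + 1/2⌋ and j* = ⌈j̃ − 1/2⌉. Then L(N) = √((i*−2)²·a² + (j*−2)²·b²), where L(N) is the infimum of lengths of segments visiting at least N tiles of the a×b grid. -/

import Mathlib

open Set

/-- Interior of the tile `T(k,l)` of the `a×b` grid. -/
noncomputable def tileInt (a b : ℝ) (k l : ℤ) : Set (ℝ × ℝ) :=
  Set.Ioo ((k : ℝ) * a) (((k : ℝ) + 1) * a) ×ˢ Set.Ioo ((l : ℝ) * b) (((l : ℝ) + 1) * b)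

/-- Number of tiles of the `a×b` grid visited by the closed segment with endpoints `p`, `q`. -/
noncomputable def visitCount (a b : ℝ) (p q : ℝ × ℝ) : ℕ :=
  Set.ncard {kl : ℤ × ℤ | (segment ℝ p q ∩ tileInt a b kl.1 kl.2).Nonempty}

/-- Normalized width of the discrete bounding rectangle of the segment with endpoints `p`, `q`. -/
noncomputable def normWidth (a : ℝ) (p q : ℝ × ℝ) : ℤ :=
  ⌈max p.1 q.1 / a⌉ - ⌊min p.1 q.1 / a⌋

/-- Normalized height of the discrete bounding rectangle of the segment with endpoints `p`, `q`. -/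
noncomputable def normHeight (b : ℝ) (p q : ℝ × ℝ) : ℤ :=
  ⌈max p.2 q.2 / b⌉ - ⌊min p.2 q.2 / b⌋

/-- Euclidean length of the segment with endpoints `p`, `q`. -/
noncomputable def segLen (p q : ℝ × ℝ) : ℝ :=
  Real.sqrt ((p.1 - q.1) ^ 2 + (p.2 - q.2) ^ 2)

/-- `maxTiles a b ℓ` : maximum number of tiles of the `a×b` grid visited by a segment of length `ℓ`. -/
noncomputable def maxTiles (a b ℓ : ℝ) : ℕ :=
  sSup {n : ℕ | ∃ p q : ℝ × ℝ, segLen p q = ℓ ∧ visitCount a b p q = n}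

/-- `infLen a b N` : infimum of lengths of segments visiting at least `N` tiles of the `a×b` grid. -/
noncomputable def infLen (a b : ℝ) (N : ℕ) : ℝ :=
  sInf {ℓ : ℝ | 0 < ℓ ∧ ∃ p q : ℝ × ℝ, segLen p q = ℓ ∧ N ≤ visitCount a b p q}

/-- `minIntLen N` : minimum positive integer length of a segment visiting at least `N` tiles
of the unit square grid. -/
noncomputable def minIntLen (N : ℕ) : ℕ :=
  sInf {L : ℕ | 1 ≤ L ∧ ∃ p q : ℝ × ℝ, segLen p q = (L : ℝ) ∧ N ≤ visitCount 1 1 p q}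

/-!
A segment spanning `w` columns and `h` rows (`normWidth`, `normHeight`) visits at most
`w + h - 1` tiles: after a reflection it runs up and to the right, so its tiles form a chain in
`ℤ × ℤ`, on which `(k, l) ↦ k + l` is injective. Its length is at least
`√((w - 2)² a² + (h - 2)² b²)`, so `L(N) ≥ min {√(u² a² + v² b²) : u + v ≥ N - 3}`.
Conversely, a segment with displacement `(u a + ε, v b + ε)`, placed so that it meets no lattice
point, crosses `u + 1` vertical and `v + 1` horizontal grid lines at distinct times, and each
crossing enters a new tile: it visits `u + v + 3` tiles. On the line `u + v = N - 3` the
objective is a parabola in `u` with vertex `c = (N - 3) b² / (a² + b²)`, so the minimum is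
attained at `u = round c = i* - 2`.
-/

def visitedTiles (a b : ℝ) (p q : ℝ × ℝ) : Set (ℤ × ℤ) :=
  {kl | (segment ℝ p q ∩ tileInt a b kl.1 kl.2).Nonempty}

lemma visitCount_eq_ncard (a b : ℝ) (p q : ℝ × ℝ) :
    visitCount a b p q = (visitedTiles a b p q).ncard := rfl

lemma visitedTiles_comm (a b : ℝ) (p q : ℝ × ℝ) :
    visitedTiles a b q p = visitedTiles a b p q := by
  simp only [visitedTiles, segment_symm]

lemma mem_tileInt_iff {a b : ℝ} {k l : ℤ} {z : ℝ × ℝ} :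
    z ∈ tileInt a b k l ↔ (k * a < z.1 ∧ z.1 < (k + 1) * a) ∧ (l * b < z.2 ∧ z.2 < (l + 1) * b) :=
  Iff.rfl

lemma mem_Icc_floor_ceil_of_mul_lt {a x s t : ℝ} {k : ℤ} (ha : 0 < a) (hk : k * a < x)
    (hk' : x < (k + 1) * a) (hs : s ≤ x) (ht : x ≤ t) : k ∈ Icc ⌊s / a⌋ (⌈t / a⌉ - 1) := by
  have h₁ : ⌊s / a⌋ < k + 1 := Int.floor_lt.2 (by push_cast; rw [div_lt_iff₀ ha]; linarith)
  have h₂ : k < ⌈t / a⌉ := Int.lt_ceil.2 (by rw [lt_div_iff₀ ha]; linarith)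
  constructor <;> omega

lemma visitedTiles_subset {a b : ℝ} (ha : 0 < a) (hb : 0 < b) (p q : ℝ × ℝ) :
    visitedTiles a b p q ⊆ Icc ⌊min p.1 q.1 / a⌋ (⌈max p.1 q.1 / a⌉ - 1) ×ˢ
      Icc ⌊min p.2 q.2 / b⌋ (⌈max p.2 q.2 / b⌉ - 1) := by
  rintro ⟨k, l⟩ ⟨z, hz, ⟨hx, hx'⟩, hy, hy'⟩
  have hz' := Prod.segment_subset p q hz
  simp only [mem_prod, segment_eq_uIcc] at hz'
  exact ⟨mem_Icc_floor_ceil_of_mul_lt ha hx hx' hz'.1.1 hz'.1.2,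
    mem_Icc_floor_ceil_of_mul_lt hb hy hy' hz'.2.1 hz'.2.2⟩

lemma visitedTiles_finite {a b : ℝ} (ha : 0 < a) (hb : 0 < b) (p q : ℝ × ℝ) :
    (visitedTiles a b p q).Finite :=
  ((finite_Icc _ _).prod (finite_Icc _ _)).subset (visitedTiles_subset ha hb p q)

lemma visitedTiles_neg_snd (a b : ℝ) (p q : ℝ × ℝ) :
    visitedTiles a b (p.1, -p.2) (q.1, -q.2) =
      (fun kl : ℤ × ℤ => (kl.1, -kl.2 - 1)) ⁻¹' visitedTiles a b p q := by
  let f : ℝ × ℝ →ₗ[ℝ] ℝ × ℝ := LinearMap.prodMap LinearMap.id (-LinearMap.id)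
  have hseg : segment ℝ (p.1, -p.2) (q.1, -q.2) = f '' segment ℝ p q :=
    (image_segment ℝ f.toAffineMap p q).symm
  have htile : ∀ k l : ℤ, f ⁻¹' tileInt a b k l = tileInt a b k (-l - 1) := by
    intro k l
    ext z
    simp only [mem_preimage, mem_tileInt_iff, f, LinearMap.prodMap_apply, LinearMap.id_apply,
      LinearMap.neg_apply]
    push_cast
    constructor <;> rintro ⟨hx, hy, hy'⟩ <;> exact ⟨hx, by linarith, by linarith⟩
  ext ⟨k, l⟩
  simp only [visitedTiles, mem_preimage, hseg, image_inter_nonempty_iff, htile]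
  rfl

lemma visitCount_neg_snd (a b : ℝ) (p q : ℝ × ℝ) :
    visitCount a b (p.1, -p.2) (q.1, -q.2) = visitCount a b p q := by
  rw [visitCount_eq_ncard, visitedTiles_neg_snd, visitCount_eq_ncard]
  refine ncard_preimage_of_injective_subset_range (fun kl kl' h => ?_) (fun kl _ => ?_)
  · simp only [Prod.mk.injEq] at h
    exact Prod.ext h.1 (by omega)
  · exact ⟨(kl.1, -kl.2 - 1), by simp⟩

lemma normHeight_neg (b : ℝ) (p q : ℝ × ℝ) :
    normHeight b (p.1, -p.2) (q.1, -q.2) = normHeight b p q := by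
  simp only [normHeight, max_neg_neg, min_neg_neg, neg_div, Int.ceil_neg, Int.floor_neg]
  ring

lemma normWidth_comm (a : ℝ) (p q : ℝ × ℝ) : normWidth a q p = normWidth a p q := by
  rw [normWidth, normWidth, max_comm, min_comm]

lemma normHeight_comm (b : ℝ) (p q : ℝ × ℝ) : normHeight b q p = normHeight b p q := by
  rw [normHeight, normHeight, max_comm, min_comm]

noncomputable def tileOf (a b : ℝ) (z : ℝ × ℝ) : ℤ × ℤ := (⌊z.1 / a⌋, ⌊z.2 / b⌋)

lemma tileOf_mono {a b : ℝ} (ha : 0 < a) (hb : 0 < b) : Monotone (tileOf a b) :=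
  fun _ _ h => ⟨Int.floor_mono (div_le_div_of_nonneg_right h.1 ha.le),
    Int.floor_mono (div_le_div_of_nonneg_right h.2 hb.le)⟩

lemma tileOf_eq_of_mem_tileInt {a b : ℝ} (ha : 0 < a) (hb : 0 < b) {k l : ℤ} {z : ℝ × ℝ}
    (h : z ∈ tileInt a b k l) : tileOf a b z = (k, l) := by
  obtain ⟨⟨hx, hx'⟩, hy, hy'⟩ := mem_tileInt_iff.1 h
  simp only [tileOf, Prod.mk.injEq, Int.floor_eq_iff, le_div_iff₀ ha, div_lt_iff₀ ha,
    le_div_iff₀ hb, div_lt_iff₀ hb]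
  exact ⟨⟨hx.le, hx'⟩, hy.le, hy'⟩

lemma le_total_of_mem_segment {𝕜 E : Type*} [Ring 𝕜] [LinearOrder 𝕜] [IsOrderedRing 𝕜]
    [AddCommGroup E] [PartialOrder E] [IsOrderedAddMonoid E] [Module 𝕜 E] [PosSMulMono 𝕜 E]
    {p q z z' : E} (hpq : p ≤ q) (hz : z ∈ segment 𝕜 p q) (hz' : z' ∈ segment 𝕜 p q) :
    z ≤ z' ∨ z' ≤ z := by
  rw [segment_eq_image'] at hz hz'
  obtain ⟨t, -, rfl⟩ := hz
  obtain ⟨t', -, rfl⟩ := hz'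
  have hd : 0 ≤ q - p := sub_nonneg.2 hpq
  rcases le_total t t' with h | h
  · exact Or.inl (add_le_add_right (smul_le_smul_of_nonneg_right h hd) p)
  · exact Or.inr (add_le_add_right (smul_le_smul_of_nonneg_right h hd) p)

lemma visitCount_le_of_le {a b : ℝ} (ha : 0 < a) (hb : 0 < b) {p q : ℝ × ℝ} (hpq : p ≤ q) :
    visitCount a b p q ≤ (normWidth a p q + normHeight b p q - 1).toNat := by
  have hinj : InjOn (fun kl : ℤ × ℤ => kl.1 + kl.2) (visitedTiles a b p q) := by
    rintro ⟨k, l⟩ ⟨z, hz, hzt⟩ ⟨k', l'⟩ ⟨z', hz', hzt'⟩ hsum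
    have hmono := tileOf_mono ha hb
    rw [← tileOf_eq_of_mem_tileInt ha hb hzt, ← tileOf_eq_of_mem_tileInt ha hb hzt'] at hsum ⊢
    rcases le_total_of_mem_segment hpq hz hz' with h | h <;>
      obtain ⟨h₁, h₂⟩ := hmono h <;>
      exact Prod.ext (by dsimp at hsum; omega) (by dsimp at hsum; omega)
  calc visitCount a b p q
      ≤ (Icc (⌊min p.1 q.1 / a⌋ + ⌊min p.2 q.2 / b⌋)
          (⌈max p.1 q.1 / a⌉ - 1 + (⌈max p.2 q.2 / b⌉ - 1))).ncard := by
        refine ncard_le_ncard_of_injOn _ (fun kl hkl => ?_) hinj (finite_Icc _ _)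
        obtain ⟨⟨hk, hk'⟩, hl, hl'⟩ := visitedTiles_subset ha hb p q hkl
        exact ⟨by omega, by omega⟩
    _ = (normWidth a p q + normHeight b p q - 1).toNat := by
        rw [← Finset.coe_Icc, ncard_coe_finset, Int.card_Icc, normWidth, normHeight]
        congr 1
        ring

lemma visitCount_le {a b : ℝ} (ha : 0 < a) (hb : 0 < b) (p q : ℝ × ℝ) :
    visitCount a b p q ≤ (normWidth a p q + normHeight b p q - 1).toNat := by
  wlog hx : p.1 ≤ q.1 generalizing p q
  · simpa only [visitCount_eq_ncard, visitedTiles_comm, normWidth_comm, normHeight_comm]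
      using this q p (by linarith)
  wlog hy : p.2 ≤ q.2 generalizing p q
  · simpa only [visitCount_neg_snd, normHeight_neg, normWidth]
      using this (p.1, -p.2) (q.1, -q.2) hx (by dsimp; linarith)
  exact visitCount_le_of_le ha hb ⟨hx, hy⟩

lemma toNat_sub_two_mul_le_abs_sub {a : ℝ} (ha : 0 < a) (x y : ℝ) :
    ((⌈max x y / a⌉ - ⌊min x y / a⌋ - 2).toNat : ℝ) * a ≤ |x - y| := by
  set n := ⌈max x y / a⌉ - ⌊min x y / a⌋ - 2 with hn
  rcases le_total n 0 with h | h
  · simp [Int.toNat_eq_zero.2 h]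
  have hceil := Int.ceil_lt_add_one (max x y / a)
  have hfloor := Int.sub_one_lt_floor (min x y / a)
  have hlt : (n : ℝ) < (max x y - min x y) / a := by
    rw [hn, sub_div]
    push_cast
    linarith
  rw [show (n.toNat : ℝ) = n by exact_mod_cast Int.toNat_of_nonneg h,
    ← max_sub_min_eq_abs']
  exact ((lt_div_iff₀ ha).1 hlt).le

lemma exists_le_abs_sub_of_le_visitCount {a b : ℝ} (ha : 0 < a) (hb : 0 < b) {N : ℕ} (hN : 1 ≤ N)
    {p q : ℝ × ℝ} (h : N ≤ visitCount a b p q) :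
    ∃ u v : ℕ, N ≤ u + v + 3 ∧ u * a ≤ |p.1 - q.1| ∧ v * b ≤ |p.2 - q.2| :=
  ⟨(normWidth a p q - 2).toNat, (normHeight b p q - 2).toNat,
    by have := h.trans (visitCount_le ha hb p q); omega,
    toNat_sub_two_mul_le_abs_sub ha _ _, toNat_sub_two_mul_le_abs_sub hb _ _⟩

lemma sqrt_le_segLen {a b : ℝ} (ha : 0 ≤ a) (hb : 0 ≤ b) {u v : ℕ} {p q : ℝ × ℝ}
    (hu : u * a ≤ |p.1 - q.1|) (hv : v * b ≤ |p.2 - q.2|) :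
    √((u : ℝ) ^ 2 * a ^ 2 + (v : ℝ) ^ 2 * b ^ 2) ≤ segLen p q := by
  have hu' := pow_le_pow_left₀ (by positivity) hu 2
  have hv' := pow_le_pow_left₀ (by positivity) hv 2
  rw [sq_abs, mul_pow] at hu' hv'
  exact Real.sqrt_le_sqrt (add_le_add hu' hv')

lemma round_sq_mul_add_sq_mul_le {a b : ℝ} (hab : a ^ 2 + b ^ 2 ≠ 0) (M : ℕ) {u v : ℕ}
    (huv : M ≤ u + v) :
    (round ((M : ℝ) * (b ^ 2 / (a ^ 2 + b ^ 2))) : ℝ) ^ 2 * a ^ 2 +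
        ((M : ℝ) - round ((M : ℝ) * (b ^ 2 / (a ^ 2 + b ^ 2)))) ^ 2 * b ^ 2 ≤
      (u : ℝ) ^ 2 * a ^ 2 + (v : ℝ) ^ 2 * b ^ 2 := by
  set c := (M : ℝ) * (b ^ 2 / (a ^ 2 + b ^ 2))
  -- on the line `u + v = M` the objective is a parabola in `u` with vertex `c`
  have hvertex : ∀ x : ℝ, x ^ 2 * a ^ 2 + (M - x) ^ 2 * b ^ 2 =
      (a ^ 2 + b ^ 2) * (c - x) ^ 2 + M ^ 2 * a ^ 2 * b ^ 2 / (a ^ 2 + b ^ 2) := by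
    intro x
    simp only [c]
    field_simp
    ring
  have hround : ∀ k : ℤ, (round c : ℝ) ^ 2 * a ^ 2 + (M - round c) ^ 2 * b ^ 2 ≤
      (k : ℝ) ^ 2 * a ^ 2 + (M - k) ^ 2 * b ^ 2 := by
    intro k
    rw [hvertex, hvertex]
    exact add_le_add_left (mul_le_mul_of_nonneg_left (sq_le_sq.2 (round_le c k))
      (add_nonneg (sq_nonneg a) (sq_nonneg b))) _
  rcases le_total u M with h | h
  · have hv : (M : ℝ) - u ≤ v := by
      have : M ≤ u + v := huv
      have : (M : ℝ) ≤ u + v := by exact_mod_cast this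
      linarith
    have hMu : (0 : ℝ) ≤ M - u := sub_nonneg.2 (by exact_mod_cast h)
    calc _ ≤ ((u : ℤ) : ℝ) ^ 2 * a ^ 2 + (M - ((u : ℤ) : ℝ)) ^ 2 * b ^ 2 := hround u
      _ ≤ (u : ℝ) ^ 2 * a ^ 2 + (v : ℝ) ^ 2 * b ^ 2 := by push_cast; gcongr
  · have hMu : (M : ℝ) ≤ u := by exact_mod_cast h
    calc _ ≤ ((M : ℤ) : ℝ) ^ 2 * a ^ 2 + (M - ((M : ℤ) : ℝ)) ^ 2 * b ^ 2 := hround M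
      _ = (M : ℝ) ^ 2 * a ^ 2 := by push_cast; ring
      _ ≤ (u : ℝ) ^ 2 * a ^ 2 + (v : ℝ) ^ 2 * b ^ 2 := by
        have : (M : ℝ) ^ 2 * a ^ 2 ≤ (u : ℝ) ^ 2 * a ^ 2 := by gcongr
        linarith [mul_nonneg (sq_nonneg (v : ℝ)) (sq_nonneg b)]


lemma floor_div_lt_floor_intCast_mul_div {a x : ℝ} (ha : 0 < a) {k : ℤ} (h : x < k * a) :
    ⌊x / a⌋ < ⌊k * a / a⌋ := by
  rw [mul_div_cancel_right₀ _ ha.ne', Int.floor_intCast]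
  exact Int.floor_lt.2 ((div_lt_iff₀ ha).2 h)

lemma tileOf_mem_visitedTiles {a b : ℝ} (ha : 0 < a) (hb : 0 < b) {p d : ℝ × ℝ} (hd₁ : 0 < d.1)
    (hd₂ : 0 < d.2) {t : ℝ} (ht₀ : 0 ≤ t) (ht₁ : t < 1) :
    tileOf a b (p + t • d) ∈ visitedTiles a b p (p + d) := by
  set k := ⌊(p.1 + t * d.1) / a⌋
  set l := ⌊(p.2 + t * d.2) / b⌋
  have hk := Int.lt_floor_add_one ((p.1 + t * d.1) / a)
  have hl := Int.lt_floor_add_one ((p.2 + t * d.2) / b)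
  rw [div_lt_iff₀ ha] at hk
  rw [div_lt_iff₀ hb] at hl
  have hev : ∀ᶠ s in nhds t, s < 1 ∧ p.1 + s * d.1 < (k + 1) * a ∧ p.2 + s * d.2 < (l + 1) * b :=
    (eventually_lt_nhds ht₁).and <|
      ((by fun_prop : Continuous fun s => p.1 + s * d.1).continuousAt.eventually_lt
          continuousAt_const hk).and
        ((by fun_prop : Continuous fun s => p.2 + s * d.2).continuousAt.eventually_lt
          continuousAt_const hl)
  obtain ⟨s, hts, hs₁, hsx, hsy⟩ := hev.exists_gt
  have hkx : (k : ℝ) * a < p.1 + s * d.1 :=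
    ((le_div_iff₀ ha).1 (Int.floor_le _)).trans_lt (by gcongr)
  have hly : (l : ℝ) * b < p.2 + s * d.2 :=
    ((le_div_iff₀ hb).1 (Int.floor_le _)).trans_lt (by gcongr)
  refine ⟨p + s • d, ?_, ?_⟩
  · rw [segment_eq_image']
    exact ⟨s, ⟨by linarith, hs₁.le⟩, by simp⟩
  · simp only [tileOf, Prod.fst_add, Prod.snd_add, Prod.smul_fst, Prod.smul_snd, smul_eq_mul]
    exact ⟨⟨hkx, hsx⟩, hly, hsy⟩

lemma card_le_visitCount {a b : ℝ} (ha : 0 < a) (hb : 0 < b) {p d : ℝ × ℝ} (hd₁ : 0 < d.1)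
    (hd₂ : 0 < d.2) (T : Finset ℝ) (hT : ∀ t ∈ T, 0 ≤ t ∧ t < 1)
    (hcross : ∀ t ∈ T, 0 < t →
      (∃ k : ℤ, p.1 + t * d.1 = k * a) ∨ ∃ l : ℤ, p.2 + t * d.2 = l * b) :
    T.card ≤ visitCount a b p (p + d) := by
  -- at a crossing time one coordinate of the tile index has just increased
  have hne : ∀ t ∈ T, ∀ t' ∈ T, t < t' → tileOf a b (p + t • d) ≠ tileOf a b (p + t' • d) := by
    intro t ht t' ht' hlt h
    simp only [tileOf, Prod.fst_add, Prod.snd_add, Prod.smul_fst, Prod.smul_snd, smul_eq_mul,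
      Prod.mk.injEq] at h
    have hx : p.1 + t * d.1 < p.1 + t' * d.1 := by gcongr
    have hy : p.2 + t * d.2 < p.2 + t' * d.2 := by gcongr
    rcases hcross t' ht' ((hT t ht).1.trans_lt hlt) with ⟨k, hk⟩ | ⟨l, hl⟩
    · rw [hk] at hx h
      exact (floor_div_lt_floor_intCast_mul_div ha hx).ne h.1
    · rw [hl] at hy h
      exact (floor_div_lt_floor_intCast_mul_div hb hy).ne h.2
  rw [← ncard_coe_finset]
  refine ncard_le_ncard_of_injOn (fun t => tileOf a b (p + t • d))
    (fun t ht => tileOf_mem_visitedTiles ha hb hd₁ hd₂ (hT t ht).1 (hT t ht).2)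
    (fun t ht t' ht' h => ?_) (visitedTiles_finite ha hb _ _)
  rcases lt_trichotomy t t' with hlt | heq | hgt
  · exact absurd h (hne t ht t' ht' hlt)
  · exact heq
  · exact absurd h.symm (hne t' ht' t ht hgt)


lemma exists_le_visitCount {a b : ℝ} (ha : 0 < a) (hb : 0 < b) (u v : ℕ) {ε : ℝ} (hε : 0 < ε) :
    ∃ p q : ℝ × ℝ, q.1 - p.1 = u * a + ε ∧ q.2 - p.2 = v * b + ε ∧
      u + v + 3 ≤ visitCount a b p q := by
  set d : ℝ × ℝ := (u * a + ε, v * b + ε)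
  have hd₁ : 0 < d.1 := by positivity
  have hd₂ : 0 < d.2 := by positivity
  set y₀ := b - ε / 2 with hy₀
  set σ : ℕ → ℝ := fun l => (l * b - y₀) / d.2
  -- `x₀` is chosen so that no vertical and horizontal grid line are crossed simultaneously
  obtain ⟨x₀, ⟨hx₀, hx₀'⟩, hbad⟩ := (Ioo_infinite (by linarith : a - ε < a)).exists_notMem_finset
    ((Finset.Icc 1 (u + 1) ×ˢ Finset.Icc 1 (v + 1)).image fun kl => kl.1 * a - σ kl.2 * d.1)
  set τ : ℕ → ℝ := fun k => (k * a - x₀) / d.1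
  have hτ : ∀ k ∈ Finset.Icc 1 (u + 1), 0 < τ k ∧ τ k < 1 := by
    intro k hk
    have hk' : (1 : ℝ) ≤ k ∧ (k : ℝ) ≤ u + 1 := by
      obtain ⟨h₁, h₂⟩ := Finset.mem_Icc.1 hk
      exact ⟨by exact_mod_cast h₁, by exact_mod_cast h₂⟩
    refine ⟨div_pos ?_ hd₁, (div_lt_one hd₁).2 ?_⟩ <;> nlinarith
  have hσ : ∀ l ∈ Finset.Icc 1 (v + 1), 0 < σ l ∧ σ l < 1 := by
    intro l hl
    have hl' : (1 : ℝ) ≤ l ∧ (l : ℝ) ≤ v + 1 := by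
      obtain ⟨h₁, h₂⟩ := Finset.mem_Icc.1 hl
      exact ⟨by exact_mod_cast h₁, by exact_mod_cast h₂⟩
    refine ⟨div_pos ?_ hd₂, (div_lt_one hd₂).2 ?_⟩ <;> simp only [hy₀, d] <;> nlinarith
  set T : Finset ℝ := insert 0 ((Finset.Icc 1 (u + 1)).image τ ∪ (Finset.Icc 1 (v + 1)).image σ)
  have hcard : T.card = u + v + 3 := by
    have hτinj : Set.InjOn τ (Finset.Icc 1 (u + 1)) := fun k _ k' _ h => by
      simpa [τ, div_left_inj' hd₁.ne', ha.ne'] using h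
    have hσinj : Set.InjOn σ (Finset.Icc 1 (v + 1)) := fun l _ l' _ h => by
      simpa [σ, div_left_inj' hd₂.ne', hb.ne'] using h
    have hdisj : Disjoint ((Finset.Icc 1 (u + 1)).image τ) ((Finset.Icc 1 (v + 1)).image σ) := by
      refine Finset.disjoint_left.2 fun t ht ht' => hbad ?_
      obtain ⟨k, hk, rfl⟩ := Finset.mem_image.1 ht
      obtain ⟨l, hl, hlk⟩ := Finset.mem_image.1 ht'
      refine Finset.mem_image.2 ⟨(k, l), Finset.mem_product.2 ⟨hk, hl⟩, ?_⟩
      simp only [hlk, τ]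
      field_simp
      ring
    have h₀ : (0 : ℝ) ∉ (Finset.Icc 1 (u + 1)).image τ ∪ (Finset.Icc 1 (v + 1)).image σ := by
      simp only [Finset.mem_union, Finset.mem_image, not_or, not_exists, not_and]
      exact ⟨fun k hk => (hτ k hk).1.ne', fun l hl => (hσ l hl).1.ne'⟩
    rw [Finset.card_insert_of_notMem h₀, Finset.card_union_of_disjoint hdisj,
      Finset.card_image_of_injOn hτinj, Finset.card_image_of_injOn hσinj, Nat.card_Icc,
      Nat.card_Icc]
    omega
  refine ⟨(x₀, y₀), (x₀, y₀) + d, by simp [d], by simp [d], hcard.symm.le.trans ?_⟩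
  refine card_le_visitCount ha hb hd₁ hd₂ T (fun t ht => ?_) (fun t ht ht₀ => ?_)
  · rcases Finset.mem_insert.1 ht with rfl | ht
    · exact ⟨le_rfl, one_pos⟩
    rcases Finset.mem_union.1 ht with ht | ht
    · obtain ⟨k, hk, rfl⟩ := Finset.mem_image.1 ht
      exact ⟨(hτ k hk).1.le, (hτ k hk).2⟩
    · obtain ⟨l, hl, rfl⟩ := Finset.mem_image.1 ht
      exact ⟨(hσ l hl).1.le, (hσ l hl).2⟩
  · rcases Finset.mem_insert.1 ht with rfl | ht
    · exact absurd ht₀ (lt_irrefl 0)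
    rcases Finset.mem_union.1 ht with ht | ht
    · obtain ⟨k, -, rfl⟩ := Finset.mem_image.1 ht
      refine Or.inl ⟨k, ?_⟩
      simp only [τ]
      field_simp
      push_cast
      ring
    · obtain ⟨l, -, rfl⟩ := Finset.mem_image.1 ht
      refine Or.inr ⟨l, ?_⟩
      simp only [σ]
      field_simp
      push_cast
      ring


theorem infLen_eq_sqrt {a b : ℝ} (ha : 0 < a) (hb : 0 < b) {N : ℕ} (hN : 1 ≤ N) {u v : ℕ}
    (huv : N ≤ u + v + 3)
    (hmin : ∀ u' v' : ℕ, N ≤ u' + v' + 3 →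
      (u : ℝ) ^ 2 * a ^ 2 + (v : ℝ) ^ 2 * b ^ 2 ≤ (u' : ℝ) ^ 2 * a ^ 2 + (v' : ℝ) ^ 2 * b ^ 2) :
    infLen a b N = √((u : ℝ) ^ 2 * a ^ 2 + (v : ℝ) ^ 2 * b ^ 2) := by
  set ℓ : ℝ → ℝ := fun ε => √((u * a + ε) ^ 2 + (v * b + ε) ^ 2)
  have hmem : ∀ ε > 0,
      ℓ ε ∈ {ℓ : ℝ | 0 < ℓ ∧ ∃ p q : ℝ × ℝ, segLen p q = ℓ ∧ N ≤ visitCount a b p q} := by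
    intro ε hε
    obtain ⟨p, q, hx, hy, hcount⟩ := exists_le_visitCount ha hb u v hε
    refine ⟨Real.sqrt_pos.2 (by positivity), p, q, ?_, huv.trans hcount⟩
    simp only [ℓ, segLen, ← hx, ← hy]
    ring_nf
  refine csInf_eq_of_forall_ge_of_forall_gt_exists_lt ⟨_, hmem 1 one_pos⟩ ?_ fun w hw => ?_
  · rintro _ ⟨-, p, q, rfl, hcount⟩
    obtain ⟨u', v', huv', hu', hv'⟩ := exists_le_abs_sub_of_le_visitCount ha hb hN hcount
    exact (Real.sqrt_le_sqrt (hmin u' v' huv')).trans (sqrt_le_segLen ha.le hb.le hu' hv')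
  · have hℓ₀ : ℓ 0 = √((u : ℝ) ^ 2 * a ^ 2 + (v : ℝ) ^ 2 * b ^ 2) := by
      simp only [ℓ, add_zero, mul_pow]
    have hℓ : Continuous ℓ := by fun_prop
    obtain ⟨ε, hε, hεw⟩ := ((hℓ.tendsto 0).eventually (gt_mem_nhds (hℓ₀ ▸ hw))).exists_gt
    exact ⟨ℓ ε, hmem ε hε, hεw⟩

lemma max_sub_three_mul_eq (N : ℕ) {x : ℝ} (hx : 0 ≤ x) :
    max (((N : ℝ) - 3) * x) 0 = ((N - 3 : ℕ) : ℝ) * x := by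
  rw [← zero_mul x, ← max_mul_of_nonneg _ _ hx]
  rcases le_total N 3 with h | h
  · simp [Nat.sub_eq_zero_of_le h, h]
  · simp [Nat.cast_sub h, h]

lemma ceil_mul_one_sub_add_two_sub_half (M : ℕ) (x : ℝ) :
    ⌈(M : ℝ) * (1 - x) + 2 - 1 / 2⌉ = M + 2 - round ((M : ℝ) * x) := by
  have : (M : ℝ) * (1 - x) + 2 - 1 / 2 = -((M : ℝ) * x + 1 / 2) + ((M + 2 : ℕ) : ℤ) := by
    push_cast
    ring
  rw [this, Int.ceil_add_intCast, Int.ceil_neg, ← round_eq]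
  push_cast
  ring

lemma round_mul_mem_Icc (M : ℕ) {x : ℝ} (hx₀ : 0 ≤ x) (hx₁ : x ≤ 1) :
    round ((M : ℝ) * x) ∈ Icc 0 (M : ℤ) := by
  have : (M : ℝ) * x ≤ M := mul_le_of_le_one_right (Nat.cast_nonneg M) hx₁
  rw [round_eq]
  refine ⟨Int.floor_nonneg.2 (by positivity), Int.floor_le_iff.2 ?_⟩
  push_cast
  linarith

theorem stmt_9 (a b : ℝ) (ha : 0 < a) (hb : 0 < b) (N : ℕ) (hN : 1 ≤ N)
    (itil jtil : ℝ)
    (hitil : itil = max (((N : ℝ) - 3) * b ^ 2 / (a ^ 2 + b ^ 2)) 0 + 2)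
    (hjtil : jtil = max (((N : ℝ) - 3) * a ^ 2 / (a ^ 2 + b ^ 2)) 0 + 2)
    (istar jstar : ℤ)
    (histar : istar = ⌊itil + 1 / 2⌋) (hjstar : jstar = ⌈jtil - 1 / 2⌉) :
    infLen a b N =
      Real.sqrt (((istar : ℝ) - 2) ^ 2 * a ^ 2 + ((jstar : ℝ) - 2) ^ 2 * b ^ 2) := by
  have hab : a ^ 2 + b ^ 2 ≠ 0 := by positivity
  set M := N - 3
  set x := b ^ 2 / (a ^ 2 + b ^ 2)
  have hx₁ : x ≤ 1 := div_le_one_of_le₀ (le_add_of_nonneg_left (sq_nonneg a)) (by positivity)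
  have hi : istar = round ((M : ℝ) * x) + 2 := by
    rw [histar, hitil, mul_div_assoc, max_sub_three_mul_eq N (by positivity), ← round_eq,
      round_add_ofNat]
  have hj : jstar = M + 2 - round ((M : ℝ) * x) := by
    rw [hjstar, hjtil, mul_div_assoc, max_sub_three_mul_eq N (by positivity),
      show a ^ 2 / (a ^ 2 + b ^ 2) = 1 - x by rw [eq_sub_iff_add_eq, ← add_div, div_self hab],
      ceil_mul_one_sub_add_two_sub_half]
  obtain ⟨hr₀, hrM⟩ := round_mul_mem_Icc M (by positivity) hx₁
  obtain ⟨u, hu⟩ := Int.eq_ofNat_of_zero_le hr₀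
  rw [infLen_eq_sqrt ha hb hN (u := u) (v := M - u) (by omega) fun u' v' h => ?_]
  · rw [hi, hj, hu]
    push_cast [Nat.cast_sub (show u ≤ M by omega)]
    ring_nf
  · have := round_sq_mul_add_sq_mul_le hab M (u := u') (v := v') (by omega)
    rw [hu] at this
    push_cast [Nat.cast_sub (show u ≤ M by omega)] at this ⊢
    exact this
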